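/- Let X, Y ⊂ ℝ² be nonempty closed sets and let f: X → Y be a homeomorphism. Then f maps the topological boundary of X onto the topological boundary of Y, i.e., f(∂X) = ∂Y, where ∂S denotes the boundary of S in ℝ². -/

import Mathlib

noncomputable section

abbrev E2 := EuclideanSpace ℝ (Fin 2)

/-!
Invariance of domain in the plane, by Borsuk's antipodal argument with winding numbers. Let `h`
be continuous and injective on a closed disc of radius `r` about `c`, and let `q` lie in a ball
around `h c` that misses the image of the circle. If `q` were not in the image of the disc, the
loop `h ∘ circleMap c r` would wind zero times around `q` (contract the disc), hence also around
`h c` (move `q` to `h c` along a segment). By injectivity, shrinking the second point of the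
antipodal pair `θ ↦ h (c + r e^{iθ}) - h (c - r e^{iθ})` to the centre is a homotopy avoiding `0`
that ends at an odd loop, and an odd loop cannot wind zero times. So interiors go to interiors
under `f` and under its inverse, which is the statement about boundaries.
-/

open Set Metric Complex Function Filter
open scoped Real Topology

/-- `L` is a continuous logarithm of `γ` on all of `ℝ`, and `m` counts the turns of `γ` over the
period `[0, 2π]`. -/
def HasWinding (γ : ℝ → ℂ) (m : ℤ) : Prop :=
  ∃ L : ℝ → ℂ, Continuous L ∧ (∀ θ, exp (L θ) = γ θ) ∧ L (2 * π) - L 0 = m * (2 * π * I)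

lemma hasWinding_const {c : ℂ} (hc : c ≠ 0) : HasWinding (fun _ ↦ c) 0 :=
  ⟨fun _ ↦ log c, continuous_const, fun _ ↦ exp_log hc, by simp⟩

lemma HasWinding.of_norm_sub_lt {γ γ' : ℝ → ℂ} {m : ℤ} (hγ : HasWinding γ m)
    (hγ' : Continuous γ') (hloop : γ (2 * π) = γ 0) (hloop' : γ' (2 * π) = γ' 0)
    (hclose : ∀ θ, ‖γ' θ - γ θ‖ < ‖γ θ‖) : HasWinding γ' m := by
  obtain ⟨L, hLc, hLexp, hLm⟩ := hγ
  have hγc : Continuous γ := funext hLexp ▸ continuous_exp.comp hLc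
  have hne : ∀ θ, γ θ ≠ 0 := fun θ ↦ norm_pos_iff.mp ((norm_nonneg _).trans_lt (hclose θ))
  have hslit : ∀ θ, γ' θ / γ θ ∈ slitPlane := fun θ ↦ by
    have : ‖γ' θ / γ θ - 1‖ < 1 := by
      rw [div_sub_one (hne θ), norm_div, div_lt_one (norm_pos_iff.mpr (hne θ))]
      exact hclose θ
    simpa using mem_slitPlane_of_norm_lt_one this
  -- dog on a leash: `γ' / γ` stays in the right half plane, where `log` is continuous
  refine ⟨fun θ ↦ L θ + log (γ' θ / γ θ), ?_, fun θ ↦ ?_, ?_⟩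
  · exact hLc.add <| continuous_iff_continuousAt.mpr fun θ ↦
      (hγ'.continuousAt.div hγc.continuousAt (hne θ)).clog (hslit θ)
  · rw [exp_add, hLexp, exp_log (slitPlane_ne_zero (hslit θ)), mul_div_cancel₀ _ (hne θ)]
  · simp only [hloop, hloop']
    linear_combination hLm

lemma const_of_exp_const {A : Type*} [TopologicalSpace A] [PreconnectedSpace A] {D : A → ℂ}
    (hD : Continuous D) (hexp : ∀ a a', exp (D a) = exp (D a')) (a a' : A) : D a = D a' :=
  isCoveringMap_exp.const_of_comp hD (fun a a' ↦ Subtype.ext (hexp a a')) a a'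

lemma not_hasWinding_zero_of_antiperiodic {γ : ℝ → ℂ} (hγ : Antiperiodic γ π) :
    ¬ HasWinding γ 0 := by
  rintro ⟨L, hLc, hLexp, hL⟩
  set D : ℝ → ℂ := fun θ ↦ L (θ + π) - L θ
  have hDexp : ∀ θ, exp (D θ) = -1 := fun θ ↦ by
    have hne : γ θ ≠ 0 := hLexp θ ▸ exp_ne_zero _
    simp only [D, exp_sub, hLexp, hγ θ, neg_div, div_self hne]
  have hDc : Continuous D := (hLc.comp (continuous_add_const π)).sub hLc
  have hD0 : D 0 = 0 := by
    have hπ := const_of_exp_const hDc (fun a a' ↦ by rw [hDexp, hDexp]) π 0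
    have : D π + D 0 = 0 := by
      simp only [D, zero_add, show π + π = 2 * π by ring]
      linear_combination hL
    linear_combination this / 2 - hπ / 2
  have := hDexp 0
  rw [hD0, exp_zero] at this
  norm_num at this

lemma HasWinding.of_homotopy {Γ : ℝ → ℝ → ℂ} {m : ℤ}
    (hΓ : ContinuousOn (uncurry Γ) (Icc 0 1 ×ˢ univ))
    (hper : ∀ s ∈ Icc (0 : ℝ) 1, Periodic (Γ s) (2 * π))
    (hne : ∀ s ∈ Icc (0 : ℝ) 1, ∀ θ, Γ s θ ≠ 0) (h0 : HasWinding (Γ 0) m) :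
    HasWinding (Γ 1) m := by
  set K : Set (ℝ × ℝ) := Icc 0 1 ×ˢ Icc 0 (2 * π)
  have hK : IsCompact K := isCompact_Icc.prod isCompact_Icc
  have hΓK : ContinuousOn (uncurry Γ) K := hΓ.mono (prod_mono_right (subset_univ _))
  have hfund : ∀ s ∈ Icc (0 : ℝ) 1, ∀ θ, ∃ φ, (s, φ) ∈ K ∧ Γ s θ = Γ s φ := fun s hs θ ↦ by
    obtain ⟨φ, hφ, hθφ⟩ := (hper s hs).exists_mem_Ico₀ Real.two_pi_pos θ
    exact ⟨φ, ⟨hs, Ico_subset_Icc_self hφ⟩, hθφ⟩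
  obtain ⟨ρ, hρ, hρΓ⟩ : ∃ ρ > 0, ∀ s ∈ Icc (0 : ℝ) 1, ∀ θ, ρ ≤ ‖Γ s θ‖ := by
    obtain ⟨w, hwK, hw⟩ := hK.exists_isMinOn ⟨(0, 0), by simp [K, Real.two_pi_pos.le]⟩ hΓK.norm
    refine ⟨‖uncurry Γ w‖, norm_pos_iff.mpr (hne _ hwK.1 _), fun s hs θ ↦ ?_⟩
    obtain ⟨φ, hφK, hθφ⟩ := hfund s hs θ
    exact hθφ ▸ hw hφK
  obtain ⟨δ, hδ, hδΓ⟩ := Metric.uniformContinuousOn_iff.mp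
    (hK.uniformContinuousOn_of_continuous hΓK) ρ hρ
  have hstep : ∀ s ∈ Icc (0 : ℝ) 1, ∀ s' ∈ Icc (0 : ℝ) 1, dist s' s < δ →
      ∀ θ, ‖Γ s' θ - Γ s θ‖ < ρ := fun s hs s' hs' hss' θ ↦ by
    obtain ⟨φ, hφ, hθφ⟩ := ((hper s' hs').sub (hper s hs)).exists_mem_Ico₀ Real.two_pi_pos θ
    have := hδΓ (s', φ) ⟨hs', Ico_subset_Icc_self hφ⟩ (s, φ) ⟨hs, Ico_subset_Icc_self hφ⟩
      (by simpa [Prod.dist_eq] using hss')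
    exact (congrArg norm hθφ).trans_lt (by simpa [dist_eq_norm] using this)
  have hloop : ∀ s ∈ Icc (0 : ℝ) 1, Γ s (2 * π) = Γ s 0 := fun s hs ↦ by
    simpa using hper s hs 0
  have hcont : ∀ s ∈ Icc (0 : ℝ) 1, Continuous (Γ s) := fun s hs ↦
    hΓ.comp_continuous (Continuous.prodMk_right s) fun θ ↦ ⟨hs, mem_univ θ⟩
  refine isPreconnected_Icc.induction₂' (fun s s' ↦ HasWinding (Γ s) m → HasWinding (Γ s') m)
    (fun s hs ↦ ?_) (fun _ _ _ _ _ _ h h' ↦ h' ∘ h) (left_mem_Icc.mpr zero_le_one)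
    (right_mem_Icc.mpr zero_le_one) h0
  filter_upwards [self_mem_nhdsWithin, mem_nhdsWithin_of_mem_nhds (ball_mem_nhds s hδ)]
    with s' hs' hss'
  refine ⟨fun h ↦ h.of_norm_sub_lt (hcont s' hs') (hloop s hs) (hloop s' hs') fun θ ↦ ?_,
    fun h ↦ h.of_norm_sub_lt (hcont s hs) (hloop s' hs') (hloop s hs) fun θ ↦ ?_⟩
  · exact (hstep s hs s' hs' hss' θ).trans_le (hρΓ s hs θ)
  · rw [← norm_neg, neg_sub]
    exact (hstep s hs s' hs' hss' θ).trans_le (hρΓ s' hs' θ)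

lemma HasWinding.sub_of_segment_disjoint {γ : ℝ → ℂ} {p q : ℂ} {m : ℤ} (hγ : Continuous γ)
    (hper : Periodic γ (2 * π)) (hseg : Disjoint (segment ℝ q p) (range γ))
    (hq : HasWinding (fun θ ↦ γ θ - q) m) : HasWinding (fun θ ↦ γ θ - p) m := by
  have := HasWinding.of_homotopy (Γ := fun s θ ↦ γ θ - (q + s • (p - q))) (m := m)
    (by fun_prop) (fun s _ θ ↦ by simp only [hper θ])
    (fun s hs θ ↦ sub_ne_zero.mpr fun hγs ↦ hseg.ne_of_mem ?_ (mem_range_self θ) hγs.symm)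
    (by simpa using hq)
  · simpa using this
  · rw [segment_eq_image']
    exact ⟨s, hs, rfl⟩

lemma circleMap_add_pi (c : ℂ) (R θ : ℝ) : circleMap c R (θ + π) = circleMap c (-R) θ := by
  simp only [circleMap, ofReal_add, add_mul, exp_add, exp_pi_mul_I, ofReal_neg]
  ring

lemma circleMap_mem_closedBall_of_abs_le (c : ℂ) {R r : ℝ} (hR : |R| ≤ r) (θ : ℝ) :
    circleMap c R θ ∈ closedBall c r :=
  sphere_subset_closedBall.trans (closedBall_subset_closedBall hR) (circleMap_mem_sphere' c R θ)

lemma ContinuousOn.comp_circleMap {h : ℂ → ℂ} {c : ℂ} {r : ℝ}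
    (hh : ContinuousOn h (closedBall c r)) {R : ℝ → ℝ} (hR : Continuous R) {S : Set ℝ}
    (hRS : ∀ s ∈ S, |R s| ≤ r) :
    ContinuousOn (fun p : ℝ × ℝ ↦ h (circleMap c (R p.1) p.2)) (S ×ˢ univ) :=
  hh.comp (Continuous.continuousOn (by unfold circleMap; fun_prop))
    fun p hp ↦ circleMap_mem_closedBall_of_abs_le c (hRS p.1 hp.1) p.2

lemma abs_mul_le_of_mem_unitInterval {s r : ℝ} (hs : s ∈ Icc (0 : ℝ) 1) (hr : 0 ≤ r) :
    |s * r| ≤ r := by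
  rw [abs_of_nonneg (mul_nonneg hs.1 hr)]
  exact mul_le_of_le_one_left hr hs.2

section Disc

variable {h : ℂ → ℂ} {c : ℂ} {r : ℝ}

lemma hasWinding_zero_of_notMem_image (hr : 0 ≤ r) (hh : ContinuousOn h (closedBall c r))
    {q : ℂ} (hq : q ∉ h '' closedBall c r) :
    HasWinding (fun θ ↦ h (circleMap c r θ) - q) 0 := by
  have hcq : h c ≠ q := fun hcq ↦ hq ⟨c, mem_closedBall_self hr, hcq⟩
  have := HasWinding.of_homotopy (Γ := fun s θ ↦ h (circleMap c (s * r) θ) - q) (m := 0)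
    ((hh.comp_circleMap (R := fun s ↦ s * r) (by fun_prop) fun s hs ↦
      abs_mul_le_of_mem_unitInterval hs hr).sub continuousOn_const)
    (fun s _ θ ↦ by simp only [periodic_circleMap c _ θ])
    (fun s hs θ ↦ sub_ne_zero.mpr fun hsq ↦ hq
      ⟨_, circleMap_mem_closedBall_of_abs_le c (abs_mul_le_of_mem_unitInterval hs hr) θ, hsq⟩)
    (by simpa using hasWinding_const (sub_ne_zero.mpr hcq))
  simpa using this

lemma not_hasWinding_zero_of_injOn (hr : 0 < r) (hh : ContinuousOn h (closedBall c r))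
    (hi : InjOn h (closedBall c r)) :
    ¬ HasWinding (fun θ ↦ h (circleMap c r θ) - h c) 0 := by
  intro h0
  refine not_hasWinding_zero_of_antiperiodic
    (γ := fun θ ↦ h (circleMap c r θ) - h (circleMap c (-r) θ))
    (fun θ ↦ by simp only [circleMap_add_pi, neg_neg, neg_sub]) ?_
  have := HasWinding.of_homotopy
    (Γ := fun s θ ↦ h (circleMap c r θ) - h (circleMap c (-(s * r)) θ)) (m := 0)
    ?_ ?_ ?_ (by simpa using h0)
  · simpa using this
  · exact (hh.comp_circleMap continuous_const fun _ _ ↦ (abs_of_pos hr).le).sub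
      (hh.comp_circleMap (R := fun s ↦ -(s * r)) (by fun_prop) fun s hs ↦
        (abs_neg (s * r)).trans_le (abs_mul_le_of_mem_unitInterval hs hr.le))
  · exact fun s _ θ ↦ by simp only [periodic_circleMap c _ θ]
  · intro s hs θ hθ
    have hmem : ∀ R, |R| ≤ r → circleMap c R θ ∈ closedBall c r := fun R hR ↦
      circleMap_mem_closedBall_of_abs_le c hR θ
    have := hi (hmem r (abs_of_pos hr).le)
      (hmem _ ((abs_neg (s * r)).trans_le (abs_mul_le_of_mem_unitInterval hs hr.le)))
      (sub_eq_zero.mp hθ)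
    simp only [circleMap, add_right_inj, mul_eq_mul_right_iff, exp_ne_zero, or_false] at this
    norm_cast at this
    nlinarith [hs.1]

lemma image_closedBall_mem_nhds (hr : 0 < r) (hh : ContinuousOn h (closedBall c r))
    (hi : InjOn h (closedBall c r)) : h '' closedBall c r ∈ 𝓝 (h c) := by
  have hS : IsClosed (h '' sphere c r) :=
    ((isCompact_sphere c r).image_of_continuousOn (hh.mono sphere_subset_closedBall)).isClosed
  have hcS : h c ∉ h '' sphere c r := by
    rintro ⟨a, ha, hac⟩
    rw [hi (sphere_subset_closedBall ha) (mem_closedBall_self hr.le) hac, mem_sphere,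
      dist_self] at ha
    exact hr.ne ha
  obtain ⟨d, hd, hball⟩ := Metric.isOpen_iff.mp hS.isOpen_compl (h c) hcS
  refine mem_of_superset (ball_mem_nhds _ hd) fun q hq ↦ by_contra fun hqK ↦ ?_
  refine not_hasWinding_zero_of_injOn hr hh hi
    ((hasWinding_zero_of_notMem_image hr.le hh hqK).sub_of_segment_disjoint
      (hh.comp_continuous (continuous_circleMap c r) (circleMap_mem_closedBall c hr.le))
      (fun θ ↦ by simp only [periodic_circleMap c r θ]) ?_)
  refine (subset_compl_iff_disjoint_right.mp hball).mono
    ((convex_ball (h c) d).segment_subset hq (mem_ball_self hd)) ?_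
  rintro _ ⟨θ, rfl⟩
  exact mem_image_of_mem h (circleMap_mem_sphere c hr.le θ)

end Disc

theorem mapsTo_interior_image_of_injOn {U : Set ℂ} {h : ℂ → ℂ} (hh : ContinuousOn h U)
    (hi : InjOn h U) : MapsTo h (interior U) (interior (h '' U)) := fun c hc ↦ by
  obtain ⟨r, hr, hrU⟩ := nhds_basis_closedBall.mem_iff.mp (mem_interior_iff_mem_nhds.mp hc)
  exact mem_interior_iff_mem_nhds.mpr <| mem_of_superset
    (image_closedBall_mem_nhds hr (hh.mono hrU) (hi.mono hrU)) (image_mono hrU)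

theorem mapsTo_interior_image_of_finrank_eq_two {E : Type*} [NormedAddCommGroup E]
    [NormedSpace ℝ E] (hE : Module.finrank ℝ E = 2) {U : Set E} {f : E → E}
    (hf : ContinuousOn f U) (hi : InjOn f U) : MapsTo f (interior U) (interior (f '' U)) := by
  have : FiniteDimensional ℝ E := Module.finite_of_finrank_eq_succ hE
  let e : E ≃ₜ ℂ := (ContinuousLinearEquiv.ofFinrankEq
    (hE.trans Complex.finrank_real_complex.symm)).toHomeomorph
  have key := mapsTo_interior_image_of_injOn (U := e '' U) (h := e ∘ f ∘ e.symm)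
    (e.continuous.comp_continuousOn (hf.comp e.symm.continuous.continuousOn (by simp [MapsTo])))
    (e.injective.injOn.comp (hi.comp e.symm.injective.injOn (by simp [MapsTo])) (mapsTo_image _ _))
  intro x hx
  have := key (e.image_interior U ▸ mem_image_of_mem e hx)
  have himage : (e ∘ f ∘ e.symm) '' (e '' U) = e '' (f '' U) := by
    simp only [image_image, comp_apply, e.symm_apply_apply]
  rw [himage, ← e.image_interior, comp_apply, comp_apply, e.symm_apply_apply] at this
  exact e.injective.mem_set_image.mp this

theorem stmt_5 (X Y : Set E2)
    (f g : E2 → E2)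
    (hf : Set.BijOn f X Y)
    (hfc : ContinuousOn f X) (hgc : ContinuousOn g Y)
    (hgf : ∀ x ∈ X, g (f x) = x) (hfg : ∀ y ∈ Y, f (g y) = y) :
    f '' (X \ interior X) = Y \ interior Y := by
  have hE : Module.finrank ℝ E2 = 2 := finrank_euclideanSpace_fin
  have hg : BijOn g Y X := hf.symm ⟨hfg, hgf⟩
  have hfint := mapsTo_interior_image_of_finrank_eq_two hE hfc hf.injOn
  have hgint := mapsTo_interior_image_of_finrank_eq_two hE hgc hg.injOn
  rw [hf.image_eq] at hfint
  rw [hg.image_eq] at hgint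
  have hint : f '' interior X = interior Y :=
    hfint.image_subset.antisymm fun y hy ↦ ⟨g y, hgint hy, hfg y (interior_subset hy)⟩
  rw [hf.injOn.image_sdiff_subset interior_subset, hf.image_eq, hint]
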